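/- Let B, C, W, Z be finite sets of integers and let X¹, X², Y¹, Y² be finite sets of integers with X¹∩X² = ∅, Y¹∩Y² = ∅ and X¹∪X² = Y¹∪Y², such that B, C, W, Z, X¹∪X² are pairwise disjoint. Then Δ(Z∪X¹∪W∪C)·Δ(B∪Z∪X²∪W)·Δ(Y¹)·Δ(Y²)·Δ(Y¹,C)·Δ(B,Y²) = Δ(Z∪Y¹∪W∪C)·Δ(B∪Z∪Y²∪W)·Δ(X¹)·Δ(X²)·Δ(X¹,C)·Δ(B,X²). In particular, the ratio Δ(Z∪X¹∪W∪C)·Δ(B∪Z∪X²∪W) / (Δ(Z∪Y¹∪W∪C)·Δ(B∪Z∪Y²∪W)) is independent of Z. -/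
import Mathlib


/-- `Δ(S) = ∏_{s₁,s₂ ∈ S, s₁ < s₂} (s₂ - s₁)`. -/
def Dset (S : Finset ℤ) : ℤ :=
  ∏ x ∈ S, ∏ y ∈ S.filter (fun y => x < y), (y - x)

/-- `Δ(S,T) = ∏_{s ∈ S, t ∈ T} |t - s|`. -/
def Dpair (S T : Finset ℤ) : ℤ :=
  ∏ s ∈ S, ∏ t ∈ T, |t - s|

lemma Dpair_comm (S T : Finset ℤ) : Dpair S T = Dpair T S := by
  unfold Dpair
  rw [Finset.prod_comm]
  apply Finset.prod_congr rfl
  intro t _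
  apply Finset.prod_congr rfl
  intro s _
  exact abs_sub_comm _ _

lemma Dpair_union_left (S S' T : Finset ℤ) (h : Disjoint S S') :
    Dpair (S ∪ S') T = Dpair S T * Dpair S' T := by
  unfold Dpair
  exact Finset.prod_union h

lemma Dpair_union_right (S T T' : Finset ℤ) (h : Disjoint T T') :
    Dpair S (T ∪ T') = Dpair S T * Dpair S T' := by
  rw [Dpair_comm, Dpair_union_left _ _ _ h, Dpair_comm T S, Dpair_comm T' S]

lemma Dset_insert (a : ℤ) (U : Finset ℤ) (ha : a ∉ U) :
    Dset (insert a U) = (∏ u ∈ U, |u - a|) * Dset U := by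
  unfold Dset
  rw [Finset.prod_insert ha]
  have h1 : (insert a U).filter (fun y => a < y) = U.filter (fun y => a < y) := by
    rw [Finset.filter_insert]
    simp
  rw [h1]
  have h2 : ∀ x ∈ U, ∏ y ∈ (insert a U).filter (fun y => x < y), (y - x)
      = (if x < a then (a - x) else 1) * ∏ y ∈ U.filter (fun y => x < y), (y - x) := by
    intro x hx
    rw [Finset.filter_insert]
    by_cases h : x < a
    · rw [if_pos h, if_pos h]
      rw [Finset.prod_insert (show a ∉ Finset.filter (fun y => x < y) U by simp [ha])]
    · rw [if_neg h, if_neg h, one_mul]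
  rw [Finset.prod_congr rfl h2, Finset.prod_mul_distrib]
  have h3 : (∏ u ∈ U, |u - a|)
      = (∏ y ∈ U.filter (fun y => a < y), (y - a)) * ∏ x ∈ U, (if x < a then (a - x) else 1) := by
    rw [Finset.prod_filter, ← Finset.prod_mul_distrib]
    apply Finset.prod_congr rfl
    intro u hu
    have hne : u ≠ a := fun h => ha (h ▸ hu)
    rcases lt_trichotomy a u with h | h | h
    · rw [if_pos h, if_neg (by omega), mul_one, abs_of_pos (by omega)]
    · exact absurd h.symm hne
    · rw [if_neg (by omega), if_pos h, one_mul, abs_of_neg (by omega)]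
      ring
  rw [h3]
  ring

lemma Dset_union (S T : Finset ℤ) (h : Disjoint S T) :
    Dset (S ∪ T) = Dset S * Dset T * Dpair S T := by
  induction S using Finset.induction with
  | empty => simp [Dset, Dpair]
  | @insert a S' ha ih =>
    have hd : Disjoint S' T := (Finset.disjoint_union_left.mp
      (by rwa [Finset.insert_eq] at h)).2
    have haT : a ∉ T := Finset.disjoint_left.mp h (Finset.mem_insert_self a S')
    have haUT : a ∉ S' ∪ T := by simp [ha, haT]
    rw [Finset.insert_union, Dset_insert a _ haUT, ih hd,
      Dset_insert a S' ha, Finset.prod_union hd]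
    have hDp : Dpair (insert a S') T = (∏ u ∈ T, |u - a|) * Dpair S' T := by
      unfold Dpair
      rw [Finset.prod_insert ha]
    rw [hDp]
    ring

theorem Z_independence_ferns (B C W Z X1 X2 Y1 Y2 : Finset ℤ)
    (hX12 : Disjoint X1 X2) (hY12 : Disjoint Y1 Y2) (hXY : X1 ∪ X2 = Y1 ∪ Y2)
    (hBC : Disjoint B C) (hBW : Disjoint B W) (hBZ : Disjoint B Z)
    (hBX : Disjoint B (X1 ∪ X2))
    (hCW : Disjoint C W) (hCZ : Disjoint C Z) (hCX : Disjoint C (X1 ∪ X2))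
    (hWZ : Disjoint W Z) (hWX : Disjoint W (X1 ∪ X2)) (hZX : Disjoint Z (X1 ∪ X2)) :
    Dset (Z ∪ X1 ∪ W ∪ C) * Dset (B ∪ Z ∪ X2 ∪ W) *
      (Dset Y1 * Dset Y2 * Dpair Y1 C * Dpair B Y2) =
    Dset (Z ∪ Y1 ∪ W ∪ C) * Dset (B ∪ Z ∪ Y2 ∪ W) *
      (Dset X1 * Dset X2 * Dpair X1 C * Dpair B X2) := by
  -- basic disjointness facts
  have hX1A : X1 ⊆ X1 ∪ X2 := Finset.subset_union_left
  have hX2A : X2 ⊆ X1 ∪ X2 := Finset.subset_union_right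
  have hY1A : Y1 ⊆ X1 ∪ X2 := hXY ▸ Finset.subset_union_left
  have hY2A : Y2 ⊆ X1 ∪ X2 := hXY ▸ Finset.subset_union_right
  have hZW : Disjoint Z W := hWZ.symm
  have hZWC : Disjoint (Z ∪ W) C := by
    rw [Finset.disjoint_union_left]; exact ⟨hCZ.symm, hCW.symm⟩
  have hBZW : Disjoint B (Z ∪ W) := by
    rw [Finset.disjoint_union_right]; exact ⟨hBZ, hBW⟩
  have hBZ_W : Disjoint (B ∪ Z) W := by
    rw [Finset.disjoint_union_left]; exact ⟨hBW, hZW⟩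
  -- for any V ⊆ X1 ∪ X2
  have key : ∀ V : Finset ℤ, V ⊆ X1 ∪ X2 →
      Disjoint V Z ∧ Disjoint V W ∧ Disjoint V C ∧ Disjoint V B := by
    intro V hV
    exact ⟨(hZX.symm.mono_left hV), (hWX.symm.mono_left hV),
      (hCX.symm.mono_left hV), (hBX.symm.mono_left hV)⟩
  obtain ⟨hX1Z, hX1W, hX1C, hX1B⟩ := key X1 hX1A
  obtain ⟨hX2Z, hX2W, hX2C, hX2B⟩ := key X2 hX2A
  obtain ⟨hY1Z, hY1W, hY1C, hY1B⟩ := key Y1 hY1A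
  obtain ⟨hY2Z, hY2W, hY2C, hY2B⟩ := key Y2 hY2A
  -- rewrite the four big unions
  have e1 : ∀ V : Finset ℤ, Z ∪ V ∪ W ∪ C = V ∪ (Z ∪ W ∪ C) := by
    intro V; ext x; simp [Finset.mem_union]; tauto
  have e2 : ∀ V : Finset ℤ, B ∪ Z ∪ V ∪ W = V ∪ (B ∪ Z ∪ W) := by
    intro V; ext x; simp [Finset.mem_union]; tauto
  have d1 : ∀ V : Finset ℤ, Disjoint V Z → Disjoint V W → Disjoint V C →
      Disjoint V (Z ∪ W ∪ C) := by
    intro V h1 h2 h3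
    rw [Finset.disjoint_union_right, Finset.disjoint_union_right]
    exact ⟨⟨h1, h2⟩, h3⟩
  have d2 : ∀ V : Finset ℤ, Disjoint V B → Disjoint V Z → Disjoint V W →
      Disjoint V (B ∪ Z ∪ W) := by
    intro V h1 h2 h3
    rw [Finset.disjoint_union_right, Finset.disjoint_union_right]
    exact ⟨⟨h1, h2⟩, h3⟩
  rw [e1 X1, e1 Y1, e2 X2, e2 Y2,
    Dset_union X1 _ (d1 X1 hX1Z hX1W hX1C),
    Dset_union Y1 _ (d1 Y1 hY1Z hY1W hY1C),
    Dset_union X2 _ (d2 X2 hX2B hX2Z hX2W),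
    Dset_union Y2 _ (d2 Y2 hY2B hY2Z hY2W)]
  -- expand the mixed Dpairs
  have pe1 : ∀ V : Finset ℤ, Disjoint V Z → Disjoint V W → Disjoint V C →
      Dpair V (Z ∪ W ∪ C) = Dpair V Z * Dpair V W * Dpair V C := by
    intro V h1 h2 h3
    rw [Dpair_union_right _ _ _ hZWC, Dpair_union_right _ _ _ hZW]
  have pe2 : ∀ V : Finset ℤ, Dpair V (B ∪ Z ∪ W) = Dpair V B * Dpair V Z * Dpair V W := by
    intro V
    rw [Dpair_union_right _ _ _ hBZ_W, Dpair_union_right _ _ _ hBZ]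
  rw [pe1 X1 hX1Z hX1W hX1C, pe1 Y1 hY1Z hY1W hY1C, pe2 X2, pe2 Y2]
  -- key identity: products over X1∪X2 = products over Y1∪Y2
  have hZkey : Dpair X1 Z * Dpair X2 Z = Dpair Y1 Z * Dpair Y2 Z := by
    rw [← Dpair_union_left _ _ _ hX12, ← Dpair_union_left _ _ _ hY12, hXY]
  have hWkey : Dpair X1 W * Dpair X2 W = Dpair Y1 W * Dpair Y2 W := by
    rw [← Dpair_union_left _ _ _ hX12, ← Dpair_union_left _ _ _ hY12, hXY]
  have hB2 : Dpair X2 B = Dpair B X2 := Dpair_comm _ _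
  have hB2' : Dpair Y2 B = Dpair B Y2 := Dpair_comm _ _
  have hcomb : (Dpair X1 Z * Dpair X2 Z) * (Dpair X1 W * Dpair X2 W)
      = (Dpair Y1 Z * Dpair Y2 Z) * (Dpair Y1 W * Dpair Y2 W) := by
    rw [hZkey, hWkey]
  rw [hB2, hB2']
  linear_combination (Dset (Z ∪ W ∪ C) * Dset (B ∪ Z ∪ W) * Dset X1 * Dset X2 *
    Dset Y1 * Dset Y2 * Dpair X1 C * Dpair Y1 C * Dpair B X2 * Dpair B Y2) * hcomb
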